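/- arXiv:1901.00201 — 7 statements merged into one kernel-verified Lean document; each statement's English description precedes it below -/
import Mathlib

section
/- Let H be a real Hilbert space, let D : H →L[ℝ] H be a self-adjoint bounded linear operator with ⟪D x, x⟫ ≥ 0 for all x ∈ H, and let δ > 0, α > 0, τ > 0, s ≥ 0, σ ≥ 1/2 be real numbers. If u, v ∈ H satisfy the two-level scheme equation (s·D + δ·I)(u − v) + (τ·α)·D(σ·u + (1−σ)·v) = 0, then ‖u‖ ≤ ‖v‖. -/
/-! Put `d = u - v`, `m = σ • u + (1 - σ) • v` and `x = s • d + (τ * α) • m`. The scheme equation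
says exactly `D x = -(δ • d)`, so positivity of `D` at `x` gives
`δ * (s * ‖d‖ ^ 2 + (τ * α) * ⟪d, m⟫) ≤ 0`, hence `⟪d, m⟫ ≤ 0`. Since
`⟪d, m⟫ = (‖u‖ ^ 2 - ‖v‖ ^ 2) / 2 + (σ - 1 / 2) * ‖d‖ ^ 2` and `σ ≥ 1 / 2`, this forces
`‖u‖ ≤ ‖v‖`. -/

section

open RealInnerProductSpace

variable {H : Type*} [NormedAddCommGroup H] [InnerProductSpace ℝ H]

theorem inner_sub_weighted_average (u v : H) (σ : ℝ) :
    ⟪u - v, σ • u + (1 - σ) • v⟫ = (‖u‖ ^ 2 - ‖v‖ ^ 2) / 2 + (σ - 1 / 2) * ‖u - v‖ ^ 2 := by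
  rw [norm_sub_sq_real]
  simp only [inner_sub_left, inner_add_right, real_inner_smul_right, real_inner_self_eq_norm_sq,
    real_inner_comm u v]
  ring

theorem norm_le_norm_of_inner_sub_weighted_average_nonpos {u v : H} {σ : ℝ} (hσ : 1 / 2 ≤ σ)
    (h : ⟪u - v, σ • u + (1 - σ) • v⟫ ≤ 0) : ‖u‖ ≤ ‖v‖ := by
  rw [inner_sub_weighted_average] at h
  have hweight : 0 ≤ (σ - 1 / 2) * ‖u - v‖ ^ 2 := mul_nonneg (by linarith) (sq_nonneg _)
  exact pow_le_pow_iff_left₀ (norm_nonneg u) (norm_nonneg v) two_ne_zero |>.mp (by linarith)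

theorem real_inner_nonpos_of_inner_neg_smul_nonneg {d m : H} {δ K s : ℝ} (hδ : 0 < δ)
    (hK : 0 < K) (hs : 0 ≤ s) (h : 0 ≤ ⟪-(δ • d), s • d + K • m⟫) : ⟪d, m⟫ ≤ 0 := by
  have hexpand : ⟪-(δ • d), s • d + K • m⟫ = -δ * (s * ‖d‖ ^ 2 + K * ⟪d, m⟫) := by
    simp only [inner_neg_left, inner_add_right, real_inner_smul_left, real_inner_smul_right,
      real_inner_self_eq_norm_sq]
    ring
  rw [hexpand] at h
  have hbracket : s * ‖d‖ ^ 2 + K * ⟪d, m⟫ ≤ 0 := nonpos_of_mul_nonneg_right h (neg_neg_of_pos hδ)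
  have hsd : 0 ≤ s * ‖d‖ ^ 2 := mul_nonneg hs (sq_nonneg _)
  exact nonpos_of_mul_nonpos_right (by linarith) hK

end

theorem two_level_scheme_step_stability_general
    {H : Type*} [NormedAddCommGroup H] [InnerProductSpace ℝ H]
    (D : H →L[ℝ] H)
    (hDpos : ∀ x : H, 0 ≤ (inner ℝ (D x) x : ℝ))
    (δ α τ s σ : ℝ) (hδ : 0 < δ) (hα : 0 < α) (hτ : 0 < τ)
    (hs : 0 ≤ s) (hσ : (1 : ℝ) / 2 ≤ σ) (u v : H)
    (heq : (s • D + δ • ContinuousLinearMap.id ℝ H) (u - v)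
        + (τ * α) • D (σ • u + (1 - σ) • v) = 0) :
    ‖u‖ ≤ ‖v‖ := by
  set d := u - v
  set m := σ • u + (1 - σ) • v
  have hDx : D (s • d + (τ * α) • m) = -(δ • d) := by
    rw [eq_neg_iff_add_eq_zero, ← heq]
    simp only [map_add, map_smul, add_apply, smul_apply, ContinuousLinearMap.id_apply]
    abel
  refine norm_le_norm_of_inner_sub_weighted_average_nonpos hσ ?_
  exact real_inner_nonpos_of_inner_neg_smul_nonneg hδ (mul_pos hτ hα) hs (hDx ▸ hDpos _)

theorem two_level_scheme_step_stability
    {H : Type*} [NormedAddCommGroup H] [InnerProductSpace ℝ H] [CompleteSpace H]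
    (D : H →L[ℝ] H) (hD : IsSelfAdjoint D)
    (hDpos : ∀ x : H, 0 ≤ (inner ℝ (D x) x : ℝ))
    (δ α τ s σ : ℝ) (hδ : 0 < δ) (hα : 0 < α) (hτ : 0 < τ)
    (hs : 0 ≤ s) (hσ : (1 : ℝ) / 2 ≤ σ) (u v : H)
    (heq : (s • D + δ • ContinuousLinearMap.id ℝ H) (u - v)
        + (τ * α) • D (σ • u + (1 - σ) • v) = 0) :
    ‖u‖ ≤ ‖v‖ :=
  two_level_scheme_step_stability_general D hDpos δ α τ s σ hδ hα hτ hs hσ u v heq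
end

section
/- Let H be a real Hilbert space, let D : H →L[ℝ] H be a self-adjoint bounded linear operator with ⟪D x, x⟫ ≥ 0 for all x ∈ H, let δ > 0, 0 < α, σ ≥ 1/2 be real numbers, let N be a positive natural number, τ = 1/N, t_n = n·τ, and let ψ ∈ H. Suppose w : ℕ → H satisfies w_0 = δ^{−α}·ψ and, for all 0 ≤ n ≤ N−1, ((σ·t_{n+1} + (1−σ)·t_n)·D + δ·I)(w_{n+1} − w_n) + (τ·α)·D(σ·w_{n+1} + (1−σ)·w_n) = 0. Then ‖w_{n+1}‖ ≤ δ^{−α}·‖ψ‖ for all 0 ≤ n ≤ N−1. -/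
/-!
With `s = σ t_{n+1} + (1 - σ) t_n`, one step of the scheme reads `B w_{n+1} = C w_n` where
`B = (s + τασ) D + δ I` and `C = (s - τα(1 - σ)) D + δ I`. Both are polynomials in `D`, so they
commute, and `B` is coercive, hence invertible by Lax–Milgram. Writing `w_n = B z` gives
`w_{n+1} = C z`, and from
`‖a D z + δ z‖² = a² ‖D z‖² + 2 a δ ⟪D z, z⟫ + δ² ‖z‖²` and `⟪D z, z⟫ ≥ 0` we get `‖C z‖ ≤ ‖B z‖`
because `σ ≥ 1/2` makes the coefficient of `D` in `B` dominate that in `C` in absolute value.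
-/

open RealInnerProductSpace

section

variable {H : Type*} [NormedAddCommGroup H] [InnerProductSpace ℝ H]

theorem ContinuousLinearMap.bijective_of_coercive [CompleteSpace H] (T : H →L[ℝ] H) {δ : ℝ}
    (hδ : 0 < δ) (hT : ∀ u, δ * ‖u‖ * ‖u‖ ≤ ⟪T u, u⟫) : Function.Bijective T := by
  have coercive : IsCoercive ((innerSL ℝ).comp T) := ⟨δ, hδ, hT⟩
  have hT' : InnerProductSpace.continuousLinearMapOfBilin ((innerSL ℝ).comp T) = T := by
    ext v
    refine ext_inner_right ℝ fun w => ?_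
    rw [InnerProductSpace.continuousLinearMapOfBilin_apply]
    rfl
  rw [← hT']
  exact ⟨LinearMap.ker_eq_bot.1 coercive.ker_eq_bot,
    LinearMap.range_eq_top.1 coercive.range_eq_top⟩

theorem norm_smul_add_smul_le_of_abs_le {v z : H} (hvz : 0 ≤ ⟪v, z⟫) {δ b c : ℝ} (hδ : 0 ≤ δ)
    (hcb : |c| ≤ b) : ‖c • v + δ • z‖ ≤ ‖b • v + δ • z‖ := by
  have expand (a : ℝ) :
      ‖a • v + δ • z‖ ^ 2 = a ^ 2 * ‖v‖ ^ 2 + 2 * a * δ * ⟪v, z⟫ + δ ^ 2 * ‖z‖ ^ 2 := by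
    rw [norm_add_sq_real, norm_smul, norm_smul, real_inner_smul_left, real_inner_smul_right,
      Real.norm_eq_abs, Real.norm_eq_abs, mul_pow, mul_pow, sq_abs, sq_abs]
    ring
  obtain ⟨hbc, hcb⟩ := abs_le.1 hcb
  rw [← pow_le_pow_iff_left₀ (norm_nonneg _) (norm_nonneg _) two_ne_zero, expand, expand]
  nlinarith [mul_nonneg (mul_nonneg (by linarith : 0 ≤ b - c) (by linarith : 0 ≤ b + c))
      (sq_nonneg ‖v‖), mul_nonneg (mul_nonneg (by linarith : 0 ≤ b - c) hδ) hvz]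

theorem mul_norm_mul_norm_le_inner_smul_add_smul_id {D : H →L[ℝ] H} (hD : ∀ x, 0 ≤ ⟪D x, x⟫)
    {b : ℝ} (hb : 0 ≤ b) (δ : ℝ) (u : H) :
    δ * ‖u‖ * ‖u‖ ≤ ⟪(b • D + δ • ContinuousLinearMap.id ℝ H) u, u⟫ := by
  rw [add_apply, inner_add_left, smul_apply, smul_apply, ContinuousLinearMap.id_apply,
    real_inner_smul_left, real_inner_smul_left, real_inner_self_eq_norm_mul_norm]
  nlinarith [mul_nonneg hb (hD u)]

theorem norm_le_of_smul_add_smul_eq [CompleteSpace H] {D : H →L[ℝ] H} (hD : ∀ x, 0 ≤ ⟪D x, x⟫)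
    {δ b c : ℝ} (hδ : 0 < δ) (hcb : |c| ≤ b) {x y : H} (h : b • D x + δ • x = c • D y + δ • y) :
    ‖x‖ ≤ ‖y‖ := by
  set B := b • D + δ • ContinuousLinearMap.id ℝ H
  set C := c • D + δ • ContinuousLinearMap.id ℝ H
  obtain ⟨hBinj, hBsurj⟩ := B.bijective_of_coercive hδ
    (mul_norm_mul_norm_le_inner_smul_add_smul_id hD ((abs_nonneg c).trans hcb) δ)
  obtain ⟨z, rfl⟩ := hBsurj y
  have hx : x = C z := hBinj <| by
    change b • D x + δ • x = _
    rw [h]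
    simp only [B, C, add_apply, smul_apply, ContinuousLinearMap.id_apply, map_add, map_smul]
  rw [hx]
  exact norm_smul_add_smul_le_of_abs_le (hD z) hδ.le hcb

theorem norm_le_of_weighted_step [CompleteSpace H] {D : H →L[ℝ] H} (hD : ∀ x, 0 ≤ ⟪D x, x⟫)
    {δ s k σ : ℝ} (hδ : 0 < δ) (hs : 0 ≤ s) (hk : 0 ≤ k) (hσ : 1 / 2 ≤ σ) {x y : H}
    (h : (s • D + δ • ContinuousLinearMap.id ℝ H) (y - x) + k • D (σ • y + (1 - σ) • x) = 0) :
    ‖y‖ ≤ ‖x‖ := by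
  refine norm_le_of_smul_add_smul_eq hD (b := s + k * σ) (c := s - k * (1 - σ)) hδ
    (abs_le.2 ⟨by nlinarith, by nlinarith⟩) ?_
  simp only [add_apply, smul_apply, ContinuousLinearMap.id_apply, map_add, map_sub, map_smul] at h
  linear_combination (norm := module) h

end

theorem two_level_scheme_unconditional_stability_general
    {H : Type*} [NormedAddCommGroup H] [InnerProductSpace ℝ H] [CompleteSpace H]
    (D : H →L[ℝ] H)
    (hDpos : ∀ x : H, 0 ≤ (inner ℝ (D x) x : ℝ))
    (δ α σ : ℝ) (hδ : 0 < δ) (hα : 0 < α) (hσ : (1 : ℝ) / 2 ≤ σ)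
    (N : ℕ) (τ : ℝ) (hτ : τ = 1 / (N : ℝ))
    (t : ℕ → ℝ) (ht : ∀ n : ℕ, t n = (n : ℝ) * τ)
    (ψ : H) (w : ℕ → H)
    (hw0 : w 0 = (δ ^ (-α) : ℝ) • ψ)
    (hscheme : ∀ n : ℕ, n ≤ N - 1 →
      ((σ * t (n + 1) + (1 - σ) * t n) • D + δ • ContinuousLinearMap.id ℝ H)
          (w (n + 1) - w n)
        + (τ * α) • D (σ • w (n + 1) + (1 - σ) • w n) = 0) :
    ∀ n : ℕ, n ≤ N - 1 → ‖w (n + 1)‖ ≤ (δ ^ (-α) : ℝ) * ‖ψ‖ := by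
  have hτ0 : 0 ≤ τ := hτ ▸ by positivity
  have hstep (n : ℕ) (hn : n ≤ N - 1) : ‖w (n + 1)‖ ≤ ‖w n‖ := by
    have hs : σ * t (n + 1) + (1 - σ) * t n = (n + σ) * τ := by
      rw [ht, ht]
      push_cast
      ring
    refine norm_le_of_weighted_step hDpos hδ ?_ (mul_nonneg hτ0 hα.le) hσ (hscheme n hn)
    rw [hs]
    exact mul_nonneg (by linarith [n.cast_nonneg (α := ℝ)]) hτ0
  have hw0_norm : ‖w 0‖ = δ ^ (-α) * ‖ψ‖ := by
    rw [hw0, norm_smul, Real.norm_of_nonneg (Real.rpow_nonneg hδ.le _)]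
  intro n hn
  rw [← hw0_norm]
  induction n with
  | zero => exact hstep 0 hn
  | succ m ih => exact (hstep (m + 1) hn).trans (ih (by omega))

/-- Theorem 1 of the paper: unconditional stability of the implicit two-level
weighted scheme for the pseudo-parabolic Cauchy problem, for `σ ≥ 1/2`. -/
theorem two_level_scheme_unconditional_stability
    {H : Type*} [NormedAddCommGroup H] [InnerProductSpace ℝ H] [CompleteSpace H]
    (D : H →L[ℝ] H) (hD : IsSelfAdjoint D)
    (hDpos : ∀ x : H, 0 ≤ (inner ℝ (D x) x : ℝ))
    (δ α σ : ℝ) (hδ : 0 < δ) (hα : 0 < α) (hσ : (1 : ℝ) / 2 ≤ σ)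
    (N : ℕ) (hN : 0 < N) (τ : ℝ) (hτ : τ = 1 / (N : ℝ))
    (t : ℕ → ℝ) (ht : ∀ n : ℕ, t n = (n : ℝ) * τ)
    (ψ : H) (w : ℕ → H)
    (hw0 : w 0 = (δ ^ (-α) : ℝ) • ψ)
    (hscheme : ∀ n : ℕ, n ≤ N - 1 →
      ((σ * t (n + 1) + (1 - σ) * t n) • D + δ • ContinuousLinearMap.id ℝ H)
          (w (n + 1) - w n)
        + (τ * α) • D (σ • w (n + 1) + (1 - σ) • w n) = 0) :
    ∀ n : ℕ, n ≤ N - 1 → ‖w (n + 1)‖ ≤ (δ ^ (-α) : ℝ) * ‖ψ‖ :=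
  two_level_scheme_unconditional_stability_general D hDpos δ α σ hδ hα hσ N τ hτ t ht ψ w hw0
    hscheme
end

section
/- Let H be a real Hilbert space, let D : H →L[ℝ] H be a self-adjoint bounded linear operator with ⟪D x, x⟫ ≥ 0 for all x ∈ H, let δ > 0, α > 0, σ > 1/4 be real numbers, let N ≥ 2 be a natural number, τ = 1/N, t_n = n·τ. Suppose w : ℕ → H satisfies, for all 1 ≤ n ≤ N−1, α⁻¹·(t_n·D + δ·I)((w_{n+1} − w_{n−1})/(2τ)) + D(σ·w_{n+1} + (1−2σ)·w_n + σ·w_{n−1}) = 0. Define the energy E_n = (1/4)·⟪D(w_n + w_{n−1}), w_n + w_{n−1}⟫ + (σ − 1/4)·⟪D(w_n − w_{n−1}), w_n − w_{n−1}⟫. Then E_{n+1} ≤ E_n for all 1 ≤ n ≤ N−1. -/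
/-!
The scheme reads `B (w₊ - w₋) + D y = 0` with `y = σ w₊ + (1 - 2σ) w + σ w₋` and the
positive operator `B = (2τα)⁻¹ (t D + δ I)`.
Pairing the scheme with `w₊ - w₋` gives `⟪D y, w₊ - w₋⟫ = -⟪B (w₊ - w₋), w₊ - w₋⟫ ≤ 0`, and for
symmetric `D` the left-hand side is exactly the energy increment `E (n + 1) - E n`.
-/

section

variable {H : Type*} [NormedAddCommGroup H] [InnerProductSpace ℝ H]

noncomputable def weightedEnergy (D : H →L[ℝ] H) (σ : ℝ) (x y : H) : ℝ :=
  (1 / 4) * inner ℝ (D (x + y)) (x + y) + (σ - 1 / 4) * inner ℝ (D (x - y)) (x - y)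

theorem weightedEnergy_sub_weightedEnergy {D : H →L[ℝ] H} (hD : D.IsSymmetric) (σ : ℝ)
    (u v z : H) :
    weightedEnergy D σ u v - weightedEnergy D σ v z =
      inner ℝ (D (σ • u + (1 - 2 * σ) • v + σ • z)) (u - z) := by
  have hsymm : ∀ x y : H, inner ℝ (D x) y = inner ℝ (D y) x := fun x y =>
    (hD x y).trans (real_inner_comm _ _)
  simp only [weightedEnergy, map_add, map_sub, map_smul, inner_add_left, inner_add_right,
    inner_sub_left, inner_sub_right, real_inner_smul_left, hsymm z u, hsymm z v, hsymm v u]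
  ring

theorem inner_nonpos_of_apply_add_eq_zero {B : H →L[ℝ] H} (hB : B.IsPositive) {d g : H}
    (h : B d + g = 0) : inner ℝ g d ≤ 0 := by
  rw [eq_neg_of_add_eq_zero_right h, inner_neg_left, neg_nonpos]
  exact hB.inner_nonneg_left d

end

theorem three_level_scheme_energy_decay_general
    {H : Type*} [NormedAddCommGroup H] [InnerProductSpace ℝ H] [CompleteSpace H]
    (D : H →L[ℝ] H) (hD : IsSelfAdjoint D)
    (hDpos : ∀ x : H, 0 ≤ (inner ℝ (D x) x : ℝ))
    (δ α σ : ℝ) (hδ : 0 < δ) (hα : 0 < α)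
    (N : ℕ) (τ : ℝ) (hτ : τ = 1 / (N : ℝ))
    (t : ℕ → ℝ) (ht : ∀ n : ℕ, t n = (n : ℝ) * τ)
    (w : ℕ → H)
    (hscheme : ∀ n : ℕ, 1 ≤ n → n ≤ N - 1 →
      α⁻¹ • ((t n • D + δ • ContinuousLinearMap.id ℝ H)
          ((2 * τ)⁻¹ • (w (n + 1) - w (n - 1))))
        + D (σ • w (n + 1) + (1 - 2 * σ) • w n + σ • w (n - 1)) = 0)
    (E : ℕ → ℝ)
    (hE : ∀ n : ℕ, E n =
      (1 / 4) * (inner ℝ (D (w n + w (n - 1))) (w n + w (n - 1)) : ℝ)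
        + (σ - 1 / 4) * (inner ℝ (D (w n - w (n - 1))) (w n - w (n - 1)) : ℝ)) :
    ∀ n : ℕ, 1 ≤ n → n ≤ N - 1 → E (n + 1) ≤ E n := by
  intro n hn1 hn2
  have hτ_nonneg : 0 ≤ τ := hτ ▸ by positivity
  have hD_pos : D.IsPositive := (ContinuousLinearMap.isPositive_iff' D).2 ⟨hD, hDpos⟩
  have hB : ((α⁻¹ * (2 * τ)⁻¹) • (t n • D + δ • ContinuousLinearMap.id ℝ H)).IsPositive :=
    ((hD_pos.smul_of_nonneg (ht n ▸ by positivity)).add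
      (ContinuousLinearMap.isPositive_id.smul_of_nonneg hδ.le)).smul_of_nonneg (by positivity)
  have hdissipation := inner_nonpos_of_apply_add_eq_zero hB (d := w (n + 1) - w (n - 1)) <| by
    simpa only [smul_apply, map_smul, smul_smul] using hscheme n hn1 hn2
  have hE' : ∀ m, E m = weightedEnergy D σ (w m) (w (m - 1)) := hE
  rw [← sub_nonpos, hE', hE', Nat.add_sub_cancel,
    weightedEnergy_sub_weightedEnergy hD_pos.isSymmetric]
  exact hdissipation

/-- Theorem 2 of the paper: unconditional stability of the three-level
symmetric weighted scheme for `σ > 1/4`: the energies `E n` are nonincreasing. -/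
theorem three_level_scheme_energy_decay
    {H : Type*} [NormedAddCommGroup H] [InnerProductSpace ℝ H] [CompleteSpace H]
    (D : H →L[ℝ] H) (hD : IsSelfAdjoint D)
    (hDpos : ∀ x : H, 0 ≤ (inner ℝ (D x) x : ℝ))
    (δ α σ : ℝ) (hδ : 0 < δ) (hα : 0 < α) (hσ : (1 : ℝ) / 4 < σ)
    (N : ℕ) (hN : 2 ≤ N) (τ : ℝ) (hτ : τ = 1 / (N : ℝ))
    (t : ℕ → ℝ) (ht : ∀ n : ℕ, t n = (n : ℝ) * τ)
    (w : ℕ → H)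
    (hscheme : ∀ n : ℕ, 1 ≤ n → n ≤ N - 1 →
      α⁻¹ • ((t n • D + δ • ContinuousLinearMap.id ℝ H)
          ((2 * τ)⁻¹ • (w (n + 1) - w (n - 1))))
        + D (σ • w (n + 1) + (1 - 2 * σ) • w n + σ • w (n - 1)) = 0)
    (E : ℕ → ℝ)
    (hE : ∀ n : ℕ, E n =
      (1 / 4) * (inner ℝ (D (w n + w (n - 1))) (w n + w (n - 1)) : ℝ)
        + (σ - 1 / 4) * (inner ℝ (D (w n - w (n - 1))) (w n - w (n - 1)) : ℝ)) :
    ∀ n : ℕ, 1 ≤ n → n ≤ N - 1 → E (n + 1) ≤ E n :=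
  three_level_scheme_energy_decay_general D hD hDpos δ α σ hδ hα N τ hτ t ht w hscheme E hE
end

section
/- Let H be a real Hilbert space, let D : H →L[ℝ] H be a self-adjoint bounded linear operator with ⟪D x, x⟫ ≥ 0 for all x ∈ H, let δ > 0 and 0 < α < 4 be real numbers, and set σ₀ = (2 + α)/(6α). Let N ≥ 2 be a natural number, τ = 1/N, t_n = n·τ, and suppose w : ℕ → H satisfies, for all 1 ≤ n ≤ N−1, α⁻¹·(t_n·D + δ·I)((w_{n+1} − w_{n−1})/(2τ)) + D(σ₀·w_{n+1} + (1−2σ₀)·w_n + σ₀·w_{n−1}) = 0. Then σ₀ > 1/4, and the energies E_n = (1/4)·⟪D(w_n + w_{n−1}), w_n + w_{n−1}⟫ + (σ₀ − 1/4)·⟪D(w_n − w_{n−1}), w_n − w_{n−1}⟫ satisfy E_{n+1} ≤ E_n for all 1 ≤ n ≤ N−1. -/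
/-!
Pair the scheme at level `n` with `w (n+1) - w (n-1)`. Since `D` is symmetric, the weighted
`D`-term pairs to exactly `E (n+1) - E n`, while the pseudo-parabolic term pairs to
`⟪(t D + δ I) x, x⟫ / (2 α τ) ≥ 0`, so the energy cannot increase. The weight condition
`σ₀ > 1/4`, which makes `E` a nonnegative quadratic form, reduces to `α < 4`.
-/

open ContinuousLinearMap

theorem one_div_four_lt_two_add_div_six_mul {α : ℝ} (hα : 0 < α) (hα4 : α < 4) :
    (1 : ℝ) / 4 < (2 + α) / (6 * α) := by
  rw [lt_div_iff₀ (by positivity)]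
  linarith

section

variable {H : Type*} [NormedAddCommGroup H] [InnerProductSpace ℝ H]

noncomputable def schemeEnergy (D : H →L[ℝ] H) (σ : ℝ) (u v : H) : ℝ :=
  (1 / 4) * inner ℝ (D (u + v)) (u + v) + (σ - 1 / 4) * inner ℝ (D (u - v)) (u - v)

theorem schemeEnergy_sub_schemeEnergy {D : H →L[ℝ] H} (hD : (D : H →ₗ[ℝ] H).IsSymmetric)
    (σ : ℝ) (a b c : H) :
    schemeEnergy D σ a b - schemeEnergy D σ b c =
      inner ℝ (D (σ • a + (1 - 2 * σ) • b + σ • c)) (a - c) := by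
  have hsymm : ∀ x y : H, inner ℝ (D x) y = inner ℝ (D y) x := fun x y => by
    rw [real_inner_comm]; exact (hD y x).symm
  simp only [schemeEnergy, map_add, map_sub, map_smul, inner_add_left, inner_add_right,
    inner_sub_left, inner_sub_right, real_inner_smul_left]
  rw [hsymm b a, hsymm c a, hsymm c b]
  ring

theorem inner_nonpos_of_smul_apply_smul_add_eq_zero {A : H →L[ℝ] H} (hA : A.IsPositive)
    {κ μ : ℝ} (hκ : 0 ≤ κ) (hμ : 0 ≤ μ) {x y : H} (h : κ • A (μ • x) + y = 0) :
    inner ℝ y x ≤ 0 := by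
  rw [eq_neg_of_add_eq_zero_right h, inner_neg_left, map_smul, real_inner_smul_left,
    real_inner_smul_left]
  exact neg_nonpos.2 (mul_nonneg hκ (mul_nonneg hμ (hA.inner_nonneg_left x)))

end

theorem fourth_order_three_level_scheme_stability_general
    {H : Type*} [NormedAddCommGroup H] [InnerProductSpace ℝ H] [CompleteSpace H]
    (D : H →L[ℝ] H) (hD : IsSelfAdjoint D)
    (hDpos : ∀ x : H, 0 ≤ (inner ℝ (D x) x : ℝ))
    (δ α : ℝ) (hδ : 0 < δ) (hα : 0 < α) (hα4 : α < 4)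
    (σ₀ : ℝ) (hσ₀ : σ₀ = (2 + α) / (6 * α))
    (N : ℕ) (τ : ℝ) (hτ : τ = 1 / (N : ℝ))
    (t : ℕ → ℝ) (ht : ∀ n : ℕ, t n = (n : ℝ) * τ)
    (w : ℕ → H)
    (hscheme : ∀ n : ℕ, 1 ≤ n → n ≤ N - 1 →
      α⁻¹ • ((t n • D + δ • ContinuousLinearMap.id ℝ H)
          ((2 * τ)⁻¹ • (w (n + 1) - w (n - 1))))
        + D (σ₀ • w (n + 1) + (1 - 2 * σ₀) • w n + σ₀ • w (n - 1)) = 0)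
    (E : ℕ → ℝ)
    (hE : ∀ n : ℕ, E n =
      (1 / 4) * (inner ℝ (D (w n + w (n - 1))) (w n + w (n - 1)) : ℝ)
        + (σ₀ - 1 / 4) * (inner ℝ (D (w n - w (n - 1))) (w n - w (n - 1)) : ℝ)) :
    (1 : ℝ) / 4 < σ₀ ∧ ∀ n : ℕ, 1 ≤ n → n ≤ N - 1 → E (n + 1) ≤ E n := by
  refine ⟨hσ₀ ▸ one_div_four_lt_two_add_div_six_mul hα hα4, fun n hn hnN => ?_⟩
  have hDpos' : D.IsPositive := (isPositive_iff' D).2 ⟨hD, hDpos⟩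
  have hτ0 : 0 ≤ τ := hτ ▸ by positivity
  have htn : 0 ≤ t n := ht n ▸ by positivity
  have hA : (t n • D + δ • ContinuousLinearMap.id ℝ H).IsPositive :=
    (hDpos'.smul_of_nonneg htn).add (isPositive_id.smul_of_nonneg hδ.le)
  have hE' : ∀ m, E m = schemeEnergy D σ₀ (w m) (w (m - 1)) := hE
  rw [← sub_nonpos, hE', hE', Nat.add_sub_cancel,
    schemeEnergy_sub_schemeEnergy hDpos'.isSymmetric]
  exact inner_nonpos_of_smul_apply_smul_add_eq_zero hA (inv_nonneg.2 hα.le) (by positivity)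
    (hscheme n hn hnN)

/-- Theorem 3 of the paper: the fourth-order three-level scheme with the optimal
weight `σ₀ = (2 + α)/(6α)` is unconditionally stable for `0 < α < 4`. -/
theorem fourth_order_three_level_scheme_stability
    {H : Type*} [NormedAddCommGroup H] [InnerProductSpace ℝ H] [CompleteSpace H]
    (D : H →L[ℝ] H) (hD : IsSelfAdjoint D)
    (hDpos : ∀ x : H, 0 ≤ (inner ℝ (D x) x : ℝ))
    (δ α : ℝ) (hδ : 0 < δ) (hα : 0 < α) (hα4 : α < 4)
    (σ₀ : ℝ) (hσ₀ : σ₀ = (2 + α) / (6 * α))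
    (N : ℕ) (hN : 2 ≤ N) (τ : ℝ) (hτ : τ = 1 / (N : ℝ))
    (t : ℕ → ℝ) (ht : ∀ n : ℕ, t n = (n : ℝ) * τ)
    (w : ℕ → H)
    (hscheme : ∀ n : ℕ, 1 ≤ n → n ≤ N - 1 →
      α⁻¹ • ((t n • D + δ • ContinuousLinearMap.id ℝ H)
          ((2 * τ)⁻¹ • (w (n + 1) - w (n - 1))))
        + D (σ₀ • w (n + 1) + (1 - 2 * σ₀) • w n + σ₀ • w (n - 1)) = 0)
    (E : ℕ → ℝ)
    (hE : ∀ n : ℕ, E n =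
      (1 / 4) * (inner ℝ (D (w n + w (n - 1))) (w n + w (n - 1)) : ℝ)
        + (σ₀ - 1 / 4) * (inner ℝ (D (w n - w (n - 1))) (w n - w (n - 1)) : ℝ)) :
    (1 : ℝ) / 4 < σ₀ ∧ ∀ n : ℕ, 1 ≤ n → n ≤ N - 1 → E (n + 1) ≤ E n :=
  fourth_order_three_level_scheme_stability_general D hD hDpos δ α hδ hα hα4 σ₀ hσ₀ N τ hτ t ht w
    hscheme E hE
end

section
/- Let H be a real Hilbert space, let D : H →L[ℝ] H be a self-adjoint bounded linear operator with ⟪D x, x⟫ ≥ 0 for all x ∈ H, and let δ > 0, α > 0 be real numbers. Suppose w : ℝ → H is differentiable on [0,1] and satisfies, for all t ∈ [0,1], α⁻¹·(t·D + δ·I)(w'(t)) + D(w(t)) = 0. Then ‖w(t)‖ ≤ ‖w(0)‖ for all t ∈ [0,1]. -/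
/-!
Pairing the equation with `α w + t w'` amounts to the following: for
`z = w + (t/α) w'` the equation reads `D z = -(δ/α) w'`, so
`0 ≤ ⟪D z, z⟫ = -(δ/α) (⟪w', w⟫ + (t/α) ‖w'‖²)`. Hence `⟪w, w'⟫ ≤ 0` for `t ≥ 0`,
i.e. `‖w‖²` is nonincreasing along the solution.
-/

open Set

section

variable {E : Type*} [NormedAddCommGroup E] [InnerProductSpace ℝ E]

theorem inner_nonpos_of_apply_add_smul_eq_neg_smul {D : E →ₗ[ℝ] E}
    (hD : ∀ x, 0 ≤ inner ℝ (D x) x) {a b : ℝ} (ha : 0 ≤ a) (hb : 0 < b) {u v : E}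
    (h : D (v + a • u) = -(b • u)) : inner ℝ u v ≤ 0 := by
  have hz := hD (v + a • u)
  rw [h, inner_neg_left, real_inner_smul_left, inner_add_right, real_inner_smul_right,
    real_inner_self_eq_norm_sq] at hz
  nlinarith [mul_nonneg ha (sq_nonneg ‖u‖)]

theorem antitoneOn_norm_of_inner_deriv_nonpos {s : Set ℝ} (hs : Convex ℝ s) {w w' : ℝ → E}
    (hw : ∀ t ∈ s, HasDerivAt w (w' t) t) (hw' : ∀ t ∈ s, inner ℝ (w t) (w' t) ≤ 0) :
    AntitoneOn (‖w ·‖) s := by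
  have hsq : AntitoneOn (‖w ·‖ ^ 2) s :=
    antitoneOn_of_hasDerivWithinAt_nonpos hs
      (fun t ht => (hw t ht).norm_sq.continuousAt.continuousWithinAt)
      (fun t ht => (hw t (interior_subset ht)).norm_sq.hasDerivWithinAt)
      (fun t ht => by nlinarith [hw' t (interior_subset ht)])
  exact fun x hx y hy hxy =>
    (pow_le_pow_iff_left₀ (norm_nonneg _) (norm_nonneg _) two_ne_zero).1 (hsq hx hy hxy)

end

theorem cauchy_problem_a_priori_estimate_general
    {H : Type*} [NormedAddCommGroup H] [InnerProductSpace ℝ H]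
    (D : H →L[ℝ] H)
    (hDpos : ∀ x : H, 0 ≤ (inner ℝ (D x) x : ℝ))
    (δ α : ℝ) (hδ : 0 < δ) (hα : 0 < α)
    (w w' : ℝ → H)
    (hderiv : ∀ t ∈ Set.Icc (0 : ℝ) 1, HasDerivAt w (w' t) t)
    (heq : ∀ t ∈ Set.Icc (0 : ℝ) 1,
      α⁻¹ • ((t • D + δ • ContinuousLinearMap.id ℝ H) (w' t)) + D (w t) = 0) :
    ∀ t ∈ Set.Icc (0 : ℝ) 1, ‖w t‖ ≤ ‖w 0‖ := by
  have hinner : ∀ t ∈ Icc (0 : ℝ) 1, inner ℝ (w t) (w' t) ≤ 0 := by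
    intro t ht
    have hz : D (w t + (α⁻¹ * t) • w' t) = -((α⁻¹ * δ) • w' t) := by
      have heqt := heq t ht
      simp only [add_apply, smul_apply, ContinuousLinearMap.id_apply] at heqt
      simp only [map_add, map_smul]
      linear_combination (norm := module) heqt
    rw [real_inner_comm]
    exact inner_nonpos_of_apply_add_smul_eq_neg_smul (D := D.toLinearMap) hDpos
      (mul_nonneg (inv_nonneg.2 hα.le) ht.1) (by positivity) hz
  intro t ht
  exact antitoneOn_norm_of_inner_deriv_nonpos (convex_Icc 0 1) hderiv hinner
    (left_mem_Icc.2 zero_le_one) ht ht.1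

/-- A priori estimate for the pseudo-parabolic Cauchy problem
`(1/α)(tD + δI) w' + D w = 0` on `[0,1]`: the norm of the solution does not
exceed the norm of the initial data. -/
theorem cauchy_problem_a_priori_estimate
    {H : Type*} [NormedAddCommGroup H] [InnerProductSpace ℝ H] [CompleteSpace H]
    (D : H →L[ℝ] H) (hD : IsSelfAdjoint D)
    (hDpos : ∀ x : H, 0 ≤ (inner ℝ (D x) x : ℝ))
    (δ α : ℝ) (hδ : 0 < δ) (hα : 0 < α)
    (w w' : ℝ → H)
    (hderiv : ∀ t ∈ Set.Icc (0 : ℝ) 1, HasDerivAt w (w' t) t)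
    (heq : ∀ t ∈ Set.Icc (0 : ℝ) 1,
      α⁻¹ • ((t • D + δ • ContinuousLinearMap.id ℝ H) (w' t)) + D (w t) = 0) :
    ∀ t ∈ Set.Icc (0 : ℝ) 1, ‖w t‖ ≤ ‖w 0‖ :=
  cauchy_problem_a_priori_estimate_general D hDpos δ α hδ hα w w' hderiv heq
end

section
/- Let H be a real Hilbert space, let D : H →L[ℝ] H be a self-adjoint bounded linear operator with ⟪D x, x⟫ ≥ 0 for all x ∈ H, and let δ > 0, α > 0, τ > 0 be real numbers with τ·‖D‖ ≤ 2δ/(1 + α). Then for every x ∈ H, ⟪((α·τ/δ)·D − (α·(1+α)·τ²/(2δ²))·D²) x, x⟫ ≥ 0; that is, R ≤ I where R = I − (α·τ/δ)·D + (α·(1+α)·τ²/(2δ²))·D². -/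
/-!
A positive operator `T` satisfies `‖T x‖² ≤ ‖T‖ ⟪T x, x⟫`: apply the Cauchy–Schwarz inequality of
the positive form `⟪T ·, ·⟫` to `x` and `T x`. Hence
`⟪(a T - b T²) x, x⟫ = a ⟪T x, x⟫ - b ‖T x‖² ≥ (a - b ‖T‖) ⟪T x, x⟫`, which is nonnegative as soon
as `b ‖T‖ ≤ a`; for `a = ατ/δ`, `b = α(1+α)τ²/(2δ²)` this is exactly the step restriction.
-/

open scoped RealInnerProductSpace

namespace ContinuousLinearMap

variable {E : Type*} [NormedAddCommGroup E] [InnerProductSpace ℝ E] {T : E →L[ℝ] E}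

theorem IsPositive.inner_map_sq_le (hT : T.IsPositive) (x y : E) :
    ⟪T x, y⟫ ^ 2 ≤ ⟪T x, x⟫ * ⟪T y, y⟫ := by
  have hquad : ∀ t : ℝ, 0 ≤ ⟪T x, x⟫ * (t * t) + 2 * ⟪T x, y⟫ * t + ⟪T y, y⟫ := by
    intro t
    have hsymm : ⟪T y, x⟫ = ⟪T x, y⟫ :=
      (hT.inner_left_eq_inner_right y x).trans (real_inner_comm _ _)
    have hexpand : ⟪T (t • x + y), t • x + y⟫
        = ⟪T x, x⟫ * (t * t) + 2 * ⟪T x, y⟫ * t + ⟪T y, y⟫ := by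
      simp only [map_add, map_smul, inner_add_left, inner_add_right,
        real_inner_smul_left, real_inner_smul_right, hsymm]
      ring
    exact hexpand ▸ hT.inner_nonneg_left (t • x + y)
  have hdiscrim := discrim_le_zero hquad
  rw [discrim] at hdiscrim
  linarith

theorem IsPositive.norm_map_sq_le (hT : T.IsPositive) (x : E) :
    ‖T x‖ ^ 2 ≤ ‖T‖ * ⟪T x, x⟫ := by
  rcases eq_or_ne (T x) 0 with hTx | hTx
  · calc ‖T x‖ ^ 2 = 0 := by simp [hTx]
      _ ≤ ‖T‖ * ⟪T x, x⟫ := mul_nonneg (norm_nonneg T) (hT.inner_nonneg_left x)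
  have hpos : 0 < ‖T x‖ ^ 2 := by positivity
  have hbound : ⟪T (T x), T x⟫ ≤ ‖T‖ * ‖T x‖ ^ 2 :=
    calc ⟪T (T x), T x⟫ ≤ ‖T (T x)‖ * ‖T x‖ := real_inner_le_norm _ _
      _ ≤ ‖T‖ * ‖T x‖ * ‖T x‖ := by gcongr; exact T.le_opNorm _
      _ = ‖T‖ * ‖T x‖ ^ 2 := by ring
  refine le_of_mul_le_mul_right ?_ hpos
  calc ‖T x‖ ^ 2 * ‖T x‖ ^ 2 = ⟪T x, T x⟫ ^ 2 := by rw [real_inner_self_eq_norm_sq]; ring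
    _ ≤ ⟪T x, x⟫ * ⟪T (T x), T x⟫ := hT.inner_map_sq_le x (T x)
    _ ≤ ⟪T x, x⟫ * (‖T‖ * ‖T x‖ ^ 2) := by gcongr; exact hT.inner_nonneg_left x
    _ = ‖T‖ * ⟪T x, x⟫ * ‖T x‖ ^ 2 := by ring

theorem IsPositive.inner_smul_sub_smul_comp_self_nonneg (hT : T.IsPositive) {a b : ℝ}
    (hb : 0 ≤ b) (hab : b * ‖T‖ ≤ a) (x : E) :
    0 ≤ ⟪(a • T - b • (T ∘L T)) x, x⟫ := by
  have hsq : ⟪(T ∘L T) x, x⟫ = ‖T x‖ ^ 2 := by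
    rw [comp_apply, hT.inner_left_eq_inner_right, real_inner_self_eq_norm_sq]
  have hTx := hT.inner_nonneg_left x
  calc 0 ≤ (a - b * ‖T‖) * ⟪T x, x⟫ := mul_nonneg (by linarith) hTx
    _ ≤ a * ⟪T x, x⟫ - b * ‖T x‖ ^ 2 := by nlinarith [hT.norm_map_sq_le x]
    _ = ⟪(a • T - b • (T ∘L T)) x, x⟫ := by
      rw [sub_apply, inner_sub_left, smul_apply, smul_apply, real_inner_smul_left,
        real_inner_smul_left, hsq]

end ContinuousLinearMap

/-- The 'right inequality' `R ≤ I` for the transition operator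
`R = I − (α/δ)τD + (α(1+α)/(2δ²))τ²D²` of the second-order explicit scheme,
under the time-step restriction `τ‖D‖ ≤ 2δ/(1+α)`. -/
theorem explicit_scheme_right_inequality
    {H : Type*} [NormedAddCommGroup H] [InnerProductSpace ℝ H] [CompleteSpace H]
    (D : H →L[ℝ] H) (hD : IsSelfAdjoint D)
    (hDpos : ∀ x : H, 0 ≤ (inner ℝ (D x) x : ℝ))
    (δ α τ : ℝ) (hδ : 0 < δ) (hα : 0 < α) (hτ : 0 < τ)
    (hstep : τ * ‖D‖ ≤ 2 * δ / (1 + α)) :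
    ∀ x : H,
      0 ≤ (inner ℝ (((α * τ / δ) • D
        - (α * (1 + α) * τ ^ 2 / (2 * δ ^ 2)) • (D ∘L D)) x) x : ℝ) := by
  have hDpositive : D.IsPositive := (D.isPositive_iff').2 ⟨hD, hDpos⟩
  have hcoef : α * (1 + α) * τ ^ 2 / (2 * δ ^ 2) * ‖D‖ ≤ α * τ / δ := by
    have hstep' : (1 + α) * (τ * ‖D‖) ≤ 2 * δ := by
      rwa [le_div_iff₀ (by positivity), mul_comm] at hstep
    rw [div_mul_eq_mul_div, div_le_div_iff₀ (by positivity) hδ]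
    nlinarith [mul_le_mul_of_nonneg_left hstep' (by positivity : 0 ≤ α * τ * δ)]
  exact hDpositive.inner_smul_sub_smul_comp_self_nonneg (by positivity) hcoef
end

section
/- Let H be a real Hilbert space, let D : H →L[ℝ] H be a self-adjoint bounded linear operator with ⟪D x, x⟫ ≥ 0 for all x ∈ H, and let δ > 0, α > 0, τ > 0 be real numbers with τ·‖D‖ ≤ 2δ/(1 + α). Define R = I − (α·τ/δ)·D + (α·(1+α)·τ²/(2δ²))·D². Then ‖R x‖ ≤ ‖x‖ for all x ∈ H. -/
/-!
With `a = ατ/δ` and `b = α(1+α)τ²/(2δ²)`, the quadratic form of `R = I - a D + b D²` is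
`‖x‖² - a⟪Dx, x⟫ + b‖Dx‖²`. For positive `D` one has `‖Dx‖² ≤ ‖D‖⟪Dx, x⟫`, so the step
restriction, which reads `b‖D‖ ≤ a`, gives `R ≤ I`. Since `⟪Dx, x⟫ ≤ ‖Dx‖‖x‖` and
`a² ≤ 8b` (i.e. `α ≤ 4(1+α)`), the form `2‖x‖² - a‖x‖‖Dx‖ + b‖Dx‖²` is nonnegative, which is
`-I ≤ R` for every `τ`. A self-adjoint operator between `-I` and `I` has norm at most one.
-/

open scoped RealInnerProductSpace

namespace ContinuousLinearMap

theorem opNorm_le_of_abs_re_inner_self_le {𝕜 E : Type*} [RCLike 𝕜] [NormedAddCommGroup E]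
    [InnerProductSpace 𝕜 E] {T : E →L[𝕜] E} (hT : T.IsSymmetric) {C : ℝ} (hC : 0 ≤ C)
    (h : ∀ x, |RCLike.re (inner 𝕜 (T x) x)| ≤ C * ‖x‖ ^ 2) : ‖T‖ ≤ C := by
  rw [T.norm_eq_iSup_rayleighQuotient hT]
  refine ciSup_le fun x ↦ ?_
  rcases eq_or_ne x 0 with rfl | hx
  · simpa using hC
  rw [rayleighQuotient, abs_div, abs_sq, div_le_iff₀ (by positivity)]
  exact h x

variable {E : Type*} [NormedAddCommGroup E] [InnerProductSpace ℝ E]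

/-- Cauchy–Schwarz for the semi-inner product `⟪T ·, ·⟫`, evaluated at `‖T‖ • x - T x`. -/
theorem IsPositive.norm_apply_sq_le {T : E →L[ℝ] E} (hT : T.IsPositive) (x : E) :
    ‖T x‖ ^ 2 ≤ ‖T‖ * ⟪T x, x⟫ := by
  set c := ‖T‖
  rcases (norm_nonneg T).eq_or_lt with hc | hc
  · have : T = 0 := norm_eq_zero.mp hc.symm
    simp [this]
  have hsymm : ⟪T (T x), x⟫ = ‖T x‖ ^ 2 := by
    rw [hT.inner_left_eq_inner_right, real_inner_comm, real_inner_self_eq_norm_sq]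
  have hexpand : ⟪T (c • x - T x), c • x - T x⟫
      = c ^ 2 * ⟪T x, x⟫ - 2 * c * ‖T x‖ ^ 2 + ⟪T (T x), T x⟫ := by
    simp only [map_sub, map_smul, inner_sub_left, inner_sub_right, real_inner_smul_left,
      real_inner_smul_right, hsymm, real_inner_self_eq_norm_sq]
    ring
  have hTTx : ⟪T (T x), T x⟫ ≤ c * ‖T x‖ ^ 2 :=
    calc ⟪T (T x), T x⟫ ≤ ‖T (T x)‖ * ‖T x‖ := real_inner_le_norm _ _
      _ ≤ c * ‖T x‖ * ‖T x‖ := by gcongr; exact T.le_opNorm _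
      _ = c * ‖T x‖ ^ 2 := by ring
  have hpos := hT.inner_nonneg_left (c • x - T x)
  refine le_of_mul_le_mul_left ?_ hc
  nlinarith

variable {T : E →L[ℝ] E}

theorem isSymmetric_id_sub_smul_add_smul_comp_self (hT : T.IsSymmetric) (a b : ℝ) :
    (ContinuousLinearMap.id ℝ E - a • T + b • (T ∘L T)).IsSymmetric := by
  intro x y
  simp only [coe_coe, add_apply, sub_apply, smul_apply, id_apply, comp_apply, inner_add_left,
    inner_add_right, inner_sub_left, inner_sub_right, real_inner_smul_left,
    real_inner_smul_right, hT.apply_clm x y, hT.apply_clm (T x) y, hT.apply_clm x (T y)]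

theorem inner_id_sub_smul_add_smul_comp_self_apply_self (hT : T.IsSymmetric) (a b : ℝ)
    (x : E) : ⟪(ContinuousLinearMap.id ℝ E - a • T + b • (T ∘L T)) x, x⟫
      = ‖x‖ ^ 2 - a * ⟪T x, x⟫ + b * ‖T x‖ ^ 2 := by
  simp only [add_apply, sub_apply, smul_apply, id_apply, comp_apply, inner_add_left,
    inner_sub_left, real_inner_smul_left, hT.apply_clm (T x) x, real_inner_self_eq_norm_sq]

theorem IsPositive.abs_inner_id_sub_smul_add_smul_comp_self_le (hT : T.IsPositive)
    {a b : ℝ} (ha : 0 ≤ a) (hba : b * ‖T‖ ≤ a) (hab : a ^ 2 ≤ 8 * b) (x : E) :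
    |⟪(ContinuousLinearMap.id ℝ E - a • T + b • (T ∘L T)) x, x⟫| ≤ ‖x‖ ^ 2 := by
  rw [inner_id_sub_smul_add_smul_comp_self_apply_self hT.isSymmetric, abs_le]
  have hb : 0 ≤ b := by nlinarith
  have hp := hT.inner_nonneg_left x
  have hTx := hT.norm_apply_sq_le x
  have hcs : ⟪T x, x⟫ ≤ ‖T x‖ * ‖x‖ := real_inner_le_norm _ _
  constructor
  · nlinarith [sq_nonneg (4 * ‖x‖ - a * ‖T x‖), mul_le_mul_of_nonneg_left hcs ha]
  · nlinarith [mul_le_mul_of_nonneg_left hTx hb, mul_le_mul_of_nonneg_right hba hp]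

theorem IsPositive.opNorm_id_sub_smul_add_smul_comp_self_le_one (hT : T.IsPositive)
    {a b : ℝ} (ha : 0 ≤ a) (hba : b * ‖T‖ ≤ a) (hab : a ^ 2 ≤ 8 * b) :
    ‖ContinuousLinearMap.id ℝ E - a • T + b • (T ∘L T)‖ ≤ 1 :=
  opNorm_le_of_abs_re_inner_self_le
    (isSymmetric_id_sub_smul_add_smul_comp_self hT.isSymmetric a b) zero_le_one fun x ↦ by
      simpa using hT.abs_inner_id_sub_smul_add_smul_comp_self_le ha hba hab x

end ContinuousLinearMap

/-- Stability of the second-order explicit scheme: the transition operator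
`R = I − (α/δ)τD + (α(1+α)/(2δ²))τ²D²` is a contraction under the time-step
restriction `τ‖D‖ ≤ 2δ/(1+α)`. -/
theorem explicit_scheme_contraction
    {H : Type*} [NormedAddCommGroup H] [InnerProductSpace ℝ H] [CompleteSpace H]
    (D : H →L[ℝ] H) (hD : IsSelfAdjoint D)
    (hDpos : ∀ x : H, 0 ≤ (inner ℝ (D x) x : ℝ))
    (δ α τ : ℝ) (hδ : 0 < δ) (hα : 0 < α) (hτ : 0 < τ)
    (hstep : τ * ‖D‖ ≤ 2 * δ / (1 + α))
    (R : H →L[ℝ] H)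
    (hR : R = ContinuousLinearMap.id ℝ H - (α * τ / δ) • D
        + (α * (1 + α) * τ ^ 2 / (2 * δ ^ 2)) • (D ∘L D)) :
    ∀ x : H, ‖R x‖ ≤ ‖x‖ := by
  have hpos : D.IsPositive := (D.isPositive_iff').mpr ⟨hD, hDpos⟩
  have hstep' : τ * ‖D‖ * (1 + α) ≤ 2 * δ := (le_div_iff₀ (by positivity)).mp hstep
  have hba : α * (1 + α) * τ ^ 2 / (2 * δ ^ 2) * ‖D‖ ≤ α * τ / δ :=
    calc α * (1 + α) * τ ^ 2 / (2 * δ ^ 2) * ‖D‖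
        = α * τ / (2 * δ ^ 2) * (τ * ‖D‖ * (1 + α)) := by ring
      _ ≤ α * τ / (2 * δ ^ 2) * (2 * δ) := by gcongr
      _ = α * τ / δ := by field_simp
  have hab : (α * τ / δ) ^ 2 ≤ 8 * (α * (1 + α) * τ ^ 2 / (2 * δ ^ 2)) := by
    rw [div_pow, mul_div_assoc', div_le_div_iff₀ (by positivity) (by positivity)]
    nlinarith [mul_pos (mul_pos hα (pow_pos hτ 2)) (pow_pos hδ 2)]
  have hR1 : ‖R‖ ≤ 1 :=
    hR ▸ hpos.opNorm_id_sub_smul_add_smul_comp_self_le_one (by positivity) hba hab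
  intro x
  simpa using R.le_of_opNorm_le hR1 x
end
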